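/- Let R = ℂ[x,y,z,u,v,w,t] and let f = x² + u·y² + 2v·y·z + w·z² + (u·w − v²)·t². Define the 4×4 matrices over R: Φ with rows (x−vt, y, z, t), (−uy−2zv, x+vt, −ut, z), (−wz, wt, x−vt, −y), (−uwt, −wz, uy+2vz, x+vt), and Φ⁺ with rows (x+vt, −y, −z, −t), (uy+2zv, x−vt, ut, −z), (wz, −wt, x+vt, y), (uwt, wz, −uy−2vz, x−vt). Then Φ·Φ⁺ = f·I₄ and Φ⁺·Φ = f·I₄. -/

import Mathlib

/-! Φ and Φ⁺ are `x·I₄ ± Ψ` for one matrix Ψ not involving `x`, and `Ψ² = -(f - x²)·I₄`.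
Since `x·I₄` is central, both products equal `x²·I₄ - Ψ² = f·I₄`. -/

noncomputable section
open MvPolynomial

abbrev R0 : Type := MvPolynomial (Fin 7) ℂ

def px : R0 := X 0
def py : R0 := X 1
def pz : R0 := X 2
def pu : R0 := X 3
def pv : R0 := X 4
def pw : R0 := X 5
def pt : R0 := X 6

def f0 : R0 := px^2 + pu*py^2 + 2*pv*py*pz + pw*pz^2 + (pu*pw - pv^2)*pt^2

def Phi : Matrix (Fin 4) (Fin 4) R0 :=
  !![px - pv*pt, py, pz, pt;
     -pu*py - 2*pz*pv, px + pv*pt, -pu*pt, pz;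
     -pw*pz, pw*pt, px - pv*pt, -py;
     -pu*pw*pt, -pw*pz, pu*py + 2*pv*pz, px + pv*pt]

def PhiP : Matrix (Fin 4) (Fin 4) R0 :=
  !![px + pv*pt, -py, -pz, -pt;
     pu*py + 2*pz*pv, px - pv*pt, pu*pt, -pz;
     pw*pz, -pw*pt, px + pv*pt, py;
     pu*pw*pt, pw*pz, -pu*py - 2*pv*pz, px - pv*pt]

section

variable {S A : Type*} [CommRing S] [Ring A] [Algebra S A]

theorem smul_one_add_mul_smul_one_sub_of_mul_self_eq_neg (a q : S) {N : A}
    (hN : N * N = -(q • 1)) :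
    (a • 1 + N) * (a • 1 - N) = (a ^ 2 + q) • (1 : A) ∧
    (a • 1 - N) * (a • 1 + N) = (a ^ 2 + q) • (1 : A) := by
  have hc : Commute (a • (1 : A)) N := (Commute.one_left N).smul_left a
  have hsq : (a ^ 2) • (1 : A) - N * N = (a ^ 2 + q) • 1 := by
    rw [hN, sub_neg_eq_add, add_smul]
  refine ⟨?_, ?_⟩
  · rw [← hc.mul_self_sub_mul_self_eq, smul_mul_smul_comm, one_mul, ← sq, hsq]
  · rw [← hc.mul_self_sub_mul_self_eq', smul_mul_smul_comm, one_mul, ← sq, hsq]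

end

def Psi : Matrix (Fin 4) (Fin 4) R0 :=
  !![-pv*pt, py, pz, pt;
     -pu*py - 2*pz*pv, pv*pt, -pu*pt, pz;
     -pw*pz, pw*pt, -pv*pt, -py;
     -pu*pw*pt, -pw*pz, pu*py + 2*pv*pz, pv*pt]

def qf : R0 := pu*py^2 + 2*pv*py*pz + pw*pz^2 + (pu*pw - pv^2)*pt^2

theorem f0_eq : f0 = px ^ 2 + qf := by
  simp only [f0, qf]; ring

theorem Phi_eq : Phi = px • 1 + Psi := by
  ext i j : 1
  fin_cases i <;> fin_cases j <;> simp [Phi, Psi] <;> ring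

theorem PhiP_eq : PhiP = px • 1 - Psi := by
  ext i j : 1
  fin_cases i <;> fin_cases j <;> simp [PhiP, Psi] <;> ring

theorem Psi_mul_self : Psi * Psi = -(qf • 1) := by
  ext i j : 1
  fin_cases i <;> fin_cases j <;>
    simp [Psi, qf, Matrix.mul_apply, Fin.sum_univ_four] <;> ring

theorem phi_mul_phiPlus :
    Phi * PhiP = f0 • (1 : Matrix (Fin 4) (Fin 4) R0) ∧
    PhiP * Phi = f0 • (1 : Matrix (Fin 4) (Fin 4) R0) := by
  rw [Phi_eq, PhiP_eq, f0_eq]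
  exact smul_one_add_mul_smul_one_sub_of_mul_self_eq_neg px qf Psi_mul_self

end
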